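/- For N ≥ 3 and 0 < μ < μ̄ := (N-2)²/4, the function V_σ(x) = C_μ (σ/(σ²|x|^{β₁} + |x|^{β₂}))^{(N-2)/2}, where β₁ = (√μ̄ - √(μ̄-μ))/√μ̄, β₂ = (√μ̄ + √(μ̄-μ))/√μ̄, C_μ = (4N(μ̄-μ)/(N-2))^{(N-2)/4}, satisfies -ΔV_σ - μ V_σ/|x|² = V_σ^{(N+2)/(N-2)} pointwise on ℝ^N \ {0}. -/

import Mathlib

/-!
Both sides depend on `x` only through `t = |x|²`. With `p = (N-2)/2`, `a = β₁/2`, `b = β₂/2`,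
`V = K w^{-p}` where `w = σ² t^a + t^b`, and on radial functions `Δ = 4 t ∂_t² + 2N ∂_t`.
Multiplying `-ΔV - μV/|x|²` by `t w^{p+2} / K` leaves a quadratic form in `σ² t^a` and `t^b`;
its two diagonal coefficients are `μ - 4p² a(1-a)` and `μ - 4p² b(1-b)`, which vanish since
`a`, `b` are the roots of `4p² z(1-z) = μ`. Only the cross term `σ² t^a t^b = σ² t` survives,
and `C_μ` is exactly the constant making it equal to `V^{(N+2)/(N-2)} = K^{2/p} K w^{-p-2}`.
-/

open MeasureTheory

noncomputable def lap {N : ℕ} (f : EuclideanSpace ℝ (Fin N) → ℝ)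
    (x : EuclideanSpace ℝ (Fin N)) : ℝ :=
  ∑ i : Fin N, fderiv ℝ (fun y => fderiv ℝ f y (EuclideanSpace.single i 1)) x
      (EuclideanSpace.single i 1)

open scoped RealInnerProductSpace

section RadialLaplacian

variable {E : Type*} [NormedAddCommGroup E] [InnerProductSpace ℝ E] {h h' : ℝ → ℝ} {d h'' : ℝ}

theorem HasDerivAt.hasFDerivAt_comp_norm_sq {y : E} (hh : HasDerivAt h d (‖y‖ ^ 2)) :
    HasFDerivAt (fun z => h (‖z‖ ^ 2)) ((2 * d) • innerSL ℝ y) y :=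
  (hh.comp_hasFDerivAt y (hasStrictFDerivAt_norm_sq y).hasFDerivAt).congr_fderiv <| by
    ext v
    simp only [smul_apply, innerSL_apply_apply, nsmul_eq_mul, Nat.cast_ofNat,
      smul_eq_mul]
    ring

theorem fderiv_fderiv_comp_norm_sq_apply {x : E} (hx : x ≠ 0)
    (hh : ∀ t, 0 < t → HasDerivAt h (h' t) t) (hh' : HasDerivAt h' h'' (‖x‖ ^ 2)) (v : E) :
    fderiv ℝ (fun y => fderiv ℝ (fun z => h (‖z‖ ^ 2)) y v) x v
      = 4 * h'' * ⟪x, v⟫ ^ 2 + 2 * h' (‖x‖ ^ 2) * ‖v‖ ^ 2 := by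
  have hfirst : (fun y => fderiv ℝ (fun z => h (‖z‖ ^ 2)) y v)
      =ᶠ[nhds x] fun y => 2 * h' (‖y‖ ^ 2) * innerSL ℝ v y := by
    filter_upwards [isOpen_ne.mem_nhds hx] with y hy
    rw [(hh _ (by positivity)).hasFDerivAt_comp_norm_sq.fderiv]
    simp [real_inner_comm]
  have hsecond : HasFDerivAt (fun y => 2 * h' (‖y‖ ^ 2) * innerSL ℝ v y) _ x :=
    (hh'.hasFDerivAt_comp_norm_sq.const_mul 2).mul (innerSL ℝ v).hasFDerivAt
  rw [hfirst.fderiv_eq, hsecond.fderiv]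
  simp only [innerSL_apply_apply, real_inner_comm, add_apply,
    smul_apply, real_inner_self_eq_norm_sq, smul_eq_mul]
  ring

theorem lap_comp_norm_sq {N : ℕ} {x : EuclideanSpace ℝ (Fin N)} (hx : x ≠ 0)
    (hh : ∀ t, 0 < t → HasDerivAt h (h' t) t) (hh' : HasDerivAt h' h'' (‖x‖ ^ 2)) :
    lap (fun y => h (‖y‖ ^ 2)) x = 4 * ‖x‖ ^ 2 * h'' + 2 * N * h' (‖x‖ ^ 2) := by
  simp only [lap, fderiv_fderiv_comp_norm_sq_apply hx hh hh', EuclideanSpace.inner_single_right,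
    PiLp.norm_single, EuclideanSpace.real_norm_sq_eq x, Finset.sum_add_distrib, ← Finset.mul_sum,
    Real.ringHom_apply, one_mul, norm_one, one_pow, Finset.sum_const, Finset.card_univ,
    Fintype.card_fin, nsmul_eq_mul, mul_one]
  ring

end RadialLaplacian

section InstantonProfile

variable (K c a b p : ℝ)

noncomputable def instantonProfile (t : ℝ) : ℝ := K * (c * t ^ a + t ^ b) ^ (-p)

noncomputable def instantonProfileDeriv (t : ℝ) : ℝ :=
  -p * K * ((c * a * t ^ (a - 1) + b * t ^ (b - 1)) * (c * t ^ a + t ^ b) ^ (-p - 1))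

variable {K c a b p} {t : ℝ}

theorem mul_rpow_add_rpow_pos (hc : 0 ≤ c) (ht : 0 < t) : 0 < c * t ^ a + t ^ b := by
  have := Real.rpow_pos_of_pos ht b
  positivity

theorem hasDerivAt_mul_rpow_add_rpow (ht : 0 < t) :
    HasDerivAt (fun r => c * r ^ a + r ^ b) (c * a * t ^ (a - 1) + b * t ^ (b - 1)) t := by
  refine (((Real.hasDerivAt_rpow_const (Or.inl ht.ne')).const_mul c).add
    (Real.hasDerivAt_rpow_const (Or.inl ht.ne'))).congr_deriv ?_
  ring

theorem hasDerivAt_instantonProfile (hc : 0 ≤ c) (ht : 0 < t) :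
    HasDerivAt (instantonProfile K c a b p) (instantonProfileDeriv K c a b p t) t := by
  show HasDerivAt (fun r => K * (c * r ^ a + r ^ b) ^ (-p)) _ t
  refine (((hasDerivAt_mul_rpow_add_rpow ht).rpow_const
    (Or.inl (mul_rpow_add_rpow_pos hc ht).ne')).const_mul K).congr_deriv ?_
  simp only [instantonProfileDeriv]
  ring

theorem hasDerivAt_instantonProfileDeriv (hc : 0 ≤ c) (ht : 0 < t) :
    HasDerivAt (instantonProfileDeriv K c a b p)
      (-p * K * ((c * a * (a - 1) * t ^ (a - 2) + b * (b - 1) * t ^ (b - 2))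
          * (c * t ^ a + t ^ b) ^ (-p - 1)
        - (p + 1) * (c * a * t ^ (a - 1) + b * t ^ (b - 1)) ^ 2
          * (c * t ^ a + t ^ b) ^ (-p - 2))) t := by
  have hinner : HasDerivAt (fun r => c * a * r ^ (a - 1) + b * r ^ (b - 1))
      (c * a * (a - 1) * t ^ (a - 2) + b * (b - 1) * t ^ (b - 2)) t := by
    refine (((Real.hasDerivAt_rpow_const (Or.inl ht.ne')).const_mul (c * a)).add
      ((Real.hasDerivAt_rpow_const (Or.inl ht.ne')).const_mul b)).congr_deriv ?_
    rw [show a - 1 - 1 = a - 2 by ring, show b - 1 - 1 = b - 2 by ring]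
    ring
  have hpow := (hasDerivAt_mul_rpow_add_rpow (c := c) (a := a) (b := b) ht).rpow_const
    (p := -p - 1) (Or.inl (mul_rpow_add_rpow_pos hc ht).ne')
  refine ((hinner.mul hpow).const_mul (-p * K)).congr_deriv ?_
  rw [show -p - 1 - 1 = -p - 2 by ring]
  ring

theorem instantonProfile_ode (hc : 0 ≤ c) (ht : 0 < t) (hab : a + b = 1) :
    -(4 * t * deriv (instantonProfileDeriv K c a b p) t
        + 2 * (2 * p + 2) * instantonProfileDeriv K c a b p t)
      - 4 * p ^ 2 * a * b * instantonProfile K c a b p t / t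
      = 4 * p * (p + 1) * (a - b) ^ 2 * c * K * (c * t ^ a + t ^ b) ^ (-p - 2) := by
  have hw := mul_rpow_add_rpow_pos (a := a) (b := b) hc ht
  have hsplit : ∀ e : ℝ, t ^ (e - 1) = t ^ e / t := fun e => Real.rpow_sub_one ht.ne' e
  have hsplit2 : ∀ e : ℝ, t ^ (e - 2) = t ^ e / t / t := fun e => by
    rw [show e - 2 = e - 1 - 1 by ring, hsplit, hsplit]
  have hw1 : (c * t ^ a + t ^ b) ^ (-p - 1)
      = (c * t ^ a + t ^ b) ^ (-p - 2) * (c * t ^ a + t ^ b) := by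
    rw [← Real.rpow_add_one hw.ne']; congr 1; ring
  have hw0 : (c * t ^ a + t ^ b) ^ (-p)
      = (c * t ^ a + t ^ b) ^ (-p - 2) * (c * t ^ a + t ^ b) * (c * t ^ a + t ^ b) := by
    rw [← Real.rpow_add_one hw.ne', ← Real.rpow_add_one hw.ne']; congr 1; ring
  have htab : t ^ a * t ^ b = t := by rw [← Real.rpow_add ht, hab, Real.rpow_one]
  rw [(hasDerivAt_instantonProfileDeriv hc ht).deriv]
  simp only [instantonProfile, instantonProfileDeriv, hsplit, hsplit2, hw1, hw0]
  have hX := Real.rpow_pos_of_pos ht a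
  have hY := Real.rpow_pos_of_pos ht b
  obtain rfl : b = 1 - a := by linarith
  set X := t ^ a
  set Y := t ^ (1 - a)
  set W := (c * X + Y) ^ (-p - 2)
  rw [← htab]
  field_simp
  ring

theorem instantonProfile_rpow (hK : 0 ≤ K) (hc : 0 ≤ c) (ht : 0 < t) (hp : 0 < p) :
    instantonProfile K c a b p t ^ ((p + 2) / p)
      = K * K ^ (2 / p) * (c * t ^ a + t ^ b) ^ (-p - 2) := by
  have hw := (mul_rpow_add_rpow_pos (a := a) (b := b) hc ht).le
  rw [instantonProfile, Real.mul_rpow hK (Real.rpow_nonneg hw _), ← Real.rpow_mul hw,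
    show (p + 2) / p = 1 + 2 / p by field_simp, Real.rpow_add' hK (by positivity), Real.rpow_one]
  congr 2
  field_simp
  ring

end InstantonProfile

theorem hardy_exponents_vieta {m μ : ℝ} (hm : 0 < m) (hμ : μ ≤ m) :
    let β₁ := (√m - √(m - μ)) / √m
    let β₂ := (√m + √(m - μ)) / √m
    β₁ + β₂ = 2 ∧ m * β₁ * β₂ = μ ∧ m * (β₁ - β₂) ^ 2 = 4 * (m - μ) := by
  have hsm : 0 < √m := Real.sqrt_pos.mpr hm
  have hm' : √m ^ 2 = m := Real.sq_sqrt hm.le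
  have hmμ : √(m - μ) ^ 2 = m - μ := Real.sq_sqrt (by linarith)
  refine ⟨?_, ?_, ?_⟩
  · field_simp; ring
  · field_simp; nlinarith
  · field_simp; nlinarith

theorem mul_div_rpow_eq_instantonProfile {C σ r β₁ β₂ p : ℝ} (hσ : 0 ≤ σ) (hr : 0 ≤ r) :
    C * (σ / (σ ^ 2 * r ^ β₁ + r ^ β₂)) ^ p
      = instantonProfile (C * σ ^ p) (σ ^ 2) (β₁ / 2) (β₂ / 2) p (r ^ 2) := by
  have hsq : ∀ β : ℝ, (r ^ 2) ^ (β / 2) = r ^ β := fun β => by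
    rw [← Real.rpow_natCast_mul hr]; congr 1; push_cast; ring
  have hw : 0 ≤ σ ^ 2 * r ^ β₁ + r ^ β₂ := by positivity
  rw [instantonProfile, hsq, hsq, Real.div_rpow hσ hw, Real.rpow_neg hw]
  ring

theorem rpow_half_mul_rpow_rpow_two_div {E σ p : ℝ} (hE : 0 ≤ E) (hσ : 0 ≤ σ) (hp : p ≠ 0) :
    (E ^ (p / 2) * σ ^ p) ^ (2 / p) = E * σ ^ 2 := by
  rw [Real.mul_rpow (Real.rpow_nonneg hE _) (Real.rpow_nonneg hσ _), ← Real.rpow_mul hE,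
    ← Real.rpow_mul hσ]
  field_simp
  rw [Real.rpow_one, Real.rpow_two]

/-- The paper's `V_σ` for `N = 2p + 2`, with `C_μ` written through the exponents. -/
noncomputable def hardyInstanton {E : Type*} [Norm E] (p σ β₁ β₂ : ℝ) (x : E) : ℝ :=
  (p * (p + 1) * (β₁ - β₂) ^ 2) ^ (p / 2) * (σ / (σ ^ 2 * ‖x‖ ^ β₁ + ‖x‖ ^ β₂)) ^ p

theorem hardyInstanton_solves {N : ℕ} {p μ σ β₁ β₂ : ℝ} (hN : (N : ℝ) = 2 * p + 2)
    (hp : 0 < p) (hσ : 0 < σ) (hsum : β₁ + β₂ = 2) (hprod : p ^ 2 * β₁ * β₂ = μ)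
    {x : EuclideanSpace ℝ (Fin N)} (hx : x ≠ 0) :
    -lap (hardyInstanton p σ β₁ β₂) x - μ * hardyInstanton p σ β₁ β₂ x / ‖x‖ ^ 2
      = hardyInstanton p σ β₁ β₂ x ^ ((p + 2) / p) := by
  set K := (p * (p + 1) * (β₁ - β₂) ^ 2) ^ (p / 2) * σ ^ p
  have hσ2 : 0 ≤ σ ^ 2 := by positivity
  have ht : 0 < ‖x‖ ^ 2 := by positivity
  have hV : ∀ y : EuclideanSpace ℝ (Fin N),
      hardyInstanton p σ β₁ β₂ y = instantonProfile K (σ ^ 2) (β₁ / 2) (β₂ / 2) p (‖y‖ ^ 2) :=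
    fun y => mul_div_rpow_eq_instantonProfile hσ.le (norm_nonneg y)
  have hlap := lap_comp_norm_sq (h := instantonProfile K (σ ^ 2) (β₁ / 2) (β₂ / 2) p) hx
    (fun t ht => hasDerivAt_instantonProfile hσ2 ht)
    (hasDerivAt_instantonProfileDeriv hσ2 ht).differentiableAt.hasDerivAt
  rw [← funext hV] at hlap
  have hode := instantonProfile_ode (K := K) (p := p) hσ2 ht
    (show β₁ / 2 + β₂ / 2 = 1 by linarith)
  rw [hlap, hV, instantonProfile_rpow (by positivity) hσ2 ht hp,
    rpow_half_mul_rpow_rpow_two_div (by positivity) hσ.le hp.ne', hN, ← hprod]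
  linear_combination hode

theorem hardy_instanton_solves_general (N : ℕ) (hN : 3 ≤ N) (μ σ : ℝ)
    (hμ : μ < ((N : ℝ) - 2) ^ 2 / 4) (hσ : 0 < σ) :
    let μbar : ℝ := ((N : ℝ) - 2) ^ 2 / 4
    let β₁ : ℝ := (Real.sqrt μbar - Real.sqrt (μbar - μ)) / Real.sqrt μbar
    let β₂ : ℝ := (Real.sqrt μbar + Real.sqrt (μbar - μ)) / Real.sqrt μbar
    let Cμ : ℝ := (4 * (N : ℝ) * (μbar - μ) / ((N : ℝ) - 2)) ^ (((N : ℝ) - 2) / 4)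
    let V : EuclideanSpace ℝ (Fin N) → ℝ :=
      fun x => Cμ * (σ / (σ ^ 2 * ‖x‖ ^ β₁ + ‖x‖ ^ β₂)) ^ (((N : ℝ) - 2) / 2)
    ∀ x : EuclideanSpace ℝ (Fin N), x ≠ 0 →
      -lap V x - μ * V x / ‖x‖ ^ 2 = V x ^ (((N : ℝ) + 2) / ((N : ℝ) - 2)) := by
  intro μbar β₁ β₂ Cμ V x hx
  set p : ℝ := ((N : ℝ) - 2) / 2 with hp_def
  have hN' : (3 : ℝ) ≤ N := by exact_mod_cast hN
  have hp : 0 < p := by linarith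
  have hNp : (N : ℝ) = 2 * p + 2 := by ring
  have hμbar : μbar = p ^ 2 := by ring
  obtain ⟨hsum, hprod, hdiff⟩ : β₁ + β₂ = 2 ∧ μbar * β₁ * β₂ = μ ∧
      μbar * (β₁ - β₂) ^ 2 = 4 * (μbar - μ) :=
    hardy_exponents_vieta (by rw [hμbar]; positivity) hμ.le
  have hCμ : Cμ = (p * (p + 1) * (β₁ - β₂) ^ 2) ^ (p / 2) := by
    have hE : 4 * (N : ℝ) * (μbar - μ) / ((N : ℝ) - 2) = p * (p + 1) * (β₁ - β₂) ^ 2 := by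
      rw [hμbar] at hdiff
      rw [hNp, hμbar, show 2 * p + 2 - 2 = 2 * p by ring]
      field_simp
      linear_combination -hdiff
    rw [← hE, hp_def, show ((N : ℝ) - 2) / 2 / 2 = ((N : ℝ) - 2) / 4 by ring]
  rw [show ((N : ℝ) + 2) / (N - 2) = (p + 2) / p by rw [hNp]; field_simp [hp.ne']; ring,
    show V = hardyInstanton p σ β₁ β₂ by
      show (fun y => Cμ * (σ / (σ ^ 2 * ‖y‖ ^ β₁ + ‖y‖ ^ β₂)) ^ p) = _
      rw [hCμ]; rfl]
  exact hardyInstanton_solves hNp hp hσ hsum (by rw [← hμbar]; exact hprod) hx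

theorem hardy_instanton_solves (N : ℕ) (hN : 3 ≤ N) (μ σ : ℝ)
    (hμ0 : 0 < μ) (hμ : μ < ((N : ℝ) - 2) ^ 2 / 4) (hσ : 0 < σ) :
    let μbar : ℝ := ((N : ℝ) - 2) ^ 2 / 4
    let β₁ : ℝ := (Real.sqrt μbar - Real.sqrt (μbar - μ)) / Real.sqrt μbar
    let β₂ : ℝ := (Real.sqrt μbar + Real.sqrt (μbar - μ)) / Real.sqrt μbar
    let Cμ : ℝ := (4 * (N : ℝ) * (μbar - μ) / ((N : ℝ) - 2)) ^ (((N : ℝ) - 2) / 4)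
    let V : EuclideanSpace ℝ (Fin N) → ℝ :=
      fun x => Cμ * (σ / (σ ^ 2 * ‖x‖ ^ β₁ + ‖x‖ ^ β₂)) ^ (((N : ℝ) - 2) / 2)
    ∀ x : EuclideanSpace ℝ (Fin N), x ≠ 0 →
      -lap V x - μ * V x / ‖x‖ ^ 2 = V x ^ (((N : ℝ) + 2) / ((N : ℝ) - 2)) :=
  hardy_instanton_solves_general N hN μ σ hμ hσ
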